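/- arXiv:1911.10647 — 3 statements merged into one kernel-verified Lean document; each statement's English description precedes it below -/
import Mathlib

section
/- Let f(x) = (x-c)^p g(x) with p ≥ 2 a natural number, g twice differentiable and g(η) ≠ 0. Set e = c - η. If the quantity D := 1 + (1/p)·e^2·((g'(η)/g(η))^2 - g''(η)/g(η)) is nonzero and p·g(η) - e·g'(η) ≠ 0, then with w(x) = -f(x)/f'(x), one has -1/w'(η) = (p - 2e·(g'(η)/g(η)) + (1/p)·e^2·(g'(η)/g(η))^2) / D. -/
/-!
By the quotient rule, `w = -f / f'` satisfies `-1 / w' = f'² / (f'² - f f'')`. For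
`f = (x - c) ^ (n + 2) * g` both `f'²` and `f f''` carry the factor `(x - c) ^ (2n + 2)`; once it
is cancelled the quotient is `((n + 2) g + (x - c) g')² / ((n + 2) g² + (x - c)² (g'² - g g''))`,
and dividing numerator and denominator by `p g(η)²` gives the stated form.
-/

section Calculus

variable {𝕜 : Type*} [NontriviallyNormedField 𝕜]

theorem neg_one_div_deriv_neg_div_deriv {f : 𝕜 → 𝕜} {x : 𝕜}
    (hf' : DifferentiableAt 𝕜 (deriv f) x) (hx : deriv f x ≠ 0) :
    -1 / deriv (fun y => -f y / deriv f y) x =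
      deriv f x ^ 2 / (deriv f x ^ 2 - f x * deriv (deriv f) x) := by
  have hf : HasDerivAt f (deriv f x) x := (differentiableAt_of_deriv_ne_zero hx).hasDerivAt
  rw [(hf.fun_neg.fun_div hf'.hasDerivAt hx).deriv, div_div_eq_mul_div,
    show -deriv f x * deriv f x - -f x * deriv (deriv f) x
      = -(deriv f x ^ 2 - f x * deriv (deriv f) x) by ring, div_neg, neg_one_mul, neg_div, neg_neg]

theorem hasDerivAt_sub_pow_succ_mul {g : 𝕜 → 𝕜} {g' x : 𝕜} (c : 𝕜) (n : ℕ)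
    (hg : HasDerivAt g g' x) :
    HasDerivAt (fun y => (y - c) ^ (n + 1) * g y)
      ((x - c) ^ n * ((n + 1) * g x + (x - c) * g')) x := by
  refine ((((hasDerivAt_id' x).sub_const c).fun_pow (n + 1)).fun_mul hg).congr_deriv ?_
  rw [Nat.add_sub_cancel]
  push_cast
  ring

theorem deriv_sub_pow_succ_mul {g : 𝕜 → 𝕜} (c : 𝕜) (n : ℕ) (hg : Differentiable 𝕜 g) :
    deriv (fun y => (y - c) ^ (n + 1) * g y) =
      fun x => (x - c) ^ n * ((n + 1) * g x + (x - c) * deriv g x) :=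
  funext fun x => (hasDerivAt_sub_pow_succ_mul c n (hg x).hasDerivAt).deriv

theorem hasDerivAt_deriv_sub_pow_add_two_mul {g : 𝕜 → 𝕜} {x : 𝕜} (c : 𝕜) (n : ℕ)
    (hg : Differentiable 𝕜 g) (hg' : DifferentiableAt 𝕜 (deriv g) x) :
    HasDerivAt (deriv fun y => (y - c) ^ (n + 2) * g y)
      ((x - c) ^ n * ((n + 1) * ((n + 2) * g x + (x - c) * deriv g x)
        + (x - c) * ((n + 3) * deriv g x + (x - c) * deriv (deriv g) x))) x := by
  rw [deriv_sub_pow_succ_mul c (n + 1) hg]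
  have hh : HasDerivAt (fun y => ((n + 1 : ℕ) + 1) * g y + (y - c) * deriv g y)
      ((n + 3) * deriv g x + (x - c) * deriv (deriv g) x) x := by
    refine (((hg x).hasDerivAt.const_mul _).add
      (((hasDerivAt_id' x).sub_const c).mul hg'.hasDerivAt)).congr_deriv ?_
    push_cast
    ring
  refine (hasDerivAt_sub_pow_succ_mul c n hh).congr_deriv ?_
  push_cast
  ring

theorem neg_one_div_deriv_neg_div_deriv_of_sub_pow_mul {g f : 𝕜 → 𝕜} {x : 𝕜} (c : 𝕜)
    (n : ℕ) (hf : ∀ y, f y = (y - c) ^ (n + 2) * g y) (hg : Differentiable 𝕜 g)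
    (hg' : DifferentiableAt 𝕜 (deriv g) x) (hx : x ≠ c)
    (hx' : (n + 2) * g x + (x - c) * deriv g x ≠ 0) :
    -1 / deriv (fun y => -f y / deriv f y) x =
      ((n + 2) * g x + (x - c) * deriv g x) ^ 2 /
        ((n + 2) * g x ^ 2 + (x - c) ^ 2 * (deriv g x ^ 2 - g x * deriv (deriv g) x)) := by
  obtain rfl : f = fun y => (y - c) ^ (n + 2) * g y := funext hf
  have ht : x - c ≠ 0 := sub_ne_zero.mpr hx
  have hf' : deriv (fun y => (y - c) ^ (n + 2) * g y) x
      = (x - c) ^ (n + 1) * ((n + 2) * g x + (x - c) * deriv g x) := by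
    rw [deriv_sub_pow_succ_mul c (n + 1) hg]
    push_cast
    ring
  have hf'' := hasDerivAt_deriv_sub_pow_add_two_mul c n hg hg'
  rw [neg_one_div_deriv_neg_div_deriv hf''.differentiableAt
    (hf' ▸ mul_ne_zero (pow_ne_zero _ ht) hx'), hf''.deriv, hf']
  convert mul_div_mul_left _ _ (pow_ne_zero 2 (pow_ne_zero (n + 1) ht)) using 2 <;> ring

end Calculus

theorem neg_inv_deriv_newton_update_general
    (c : ℝ) (p : ℕ) (hp : 2 ≤ p)
    (g : ℝ → ℝ) (hg : Differentiable ℝ g) (hg' : Differentiable ℝ (deriv g))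
    (f : ℝ → ℝ) (hf : ∀ x, f x = (x - c) ^ p * g x)
    (w : ℝ → ℝ) (hw : ∀ x, w x = -f x / deriv f x)
    (η : ℝ) (hη : η ≠ c) (hgη : g η ≠ 0)
    (e : ℝ) (he : e = c - η)
    (hden : (p : ℝ) * g η - e * deriv g η ≠ 0)
    (D : ℝ)
    (hD : D = 1 + (1 / (p : ℝ)) * e ^ 2 *
      ((deriv g η / g η) ^ 2 - deriv (deriv g) η / g η)) :
    -1 / deriv w η =
      ((p : ℝ) - 2 * e * (deriv g η / g η)
        + (1 / (p : ℝ)) * e ^ 2 * (deriv g η / g η) ^ 2) / D := by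
  obtain ⟨n, rfl⟩ := Nat.exists_eq_add_of_le' hp
  obtain rfl : w = fun y => -f y / deriv f y := funext hw
  have hpa : ((n + 2 : ℕ) : ℝ) * g η ^ 2 ≠ 0 := by positivity
  rw [neg_one_div_deriv_neg_div_deriv_of_sub_pow_mul c n hf hg (hg' η) hη
    (by convert hden using 1; rw [he]; push_cast; ring), ← div_div_div_cancel_right₀ hpa]
  subst he hD
  push_cast
  congr 1 <;> field_simp <;> ring

/-- the formula for -1/w'(η) for the Newton update w = -f/f' with
f(x) = (x-c)^p g(x). -/
theorem neg_inv_deriv_newton_update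
    (c : ℝ) (p : ℕ) (hp : 2 ≤ p)
    (g : ℝ → ℝ) (hg : Differentiable ℝ g) (hg' : Differentiable ℝ (deriv g))
    (f : ℝ → ℝ) (hf : ∀ x, f x = (x - c) ^ p * g x)
    (w : ℝ → ℝ) (hw : ∀ x, w x = -f x / deriv f x)
    (η : ℝ) (hη : η ≠ c) (hgη : g η ≠ 0)
    (e : ℝ) (he : e = c - η)
    (hden : (p : ℝ) * g η - e * deriv g η ≠ 0)
    (D : ℝ)
    (hD : D = 1 + (1 / (p : ℝ)) * e ^ 2 *
      ((deriv g η / g η) ^ 2 - deriv (deriv g) η / g η))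
    (hDne : D ≠ 0) :
    -1 / deriv w η =
      ((p : ℝ) - 2 * e * (deriv g η / g η)
        + (1 / (p : ℝ)) * e ^ 2 * (deriv g η / g η) ^ 2) / D :=
  neg_inv_deriv_newton_update_general c p hp g hg hg' f hf w hw η hη hgη e he hden D hD
end

section
/- For f(x) = (x-c)^p g(x) with natural p ≥ 1 and g differentiable with g nonzero near c, the modified Newton iteration x_{k+1} = x_k - p·f(x_k)/f'(x_k) has error satisfying e(x_{k+1}) = -e(x_k)^2·g'(x_k)/(p·g(x_k) - e(x_k)·g'(x_k)), where e(x) = c - x; in particular, if |g'(x)/g(x)| ≤ M and |e(x_k)| ≤ p/(2M), then |e(x_{k+1})| ≤ (2M/p)·e(x_k)^2. -/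
/-!
Multiplying the product rule by `x - c` gives `f'(x) (x - c) = (x - c)^p (p g(x) - e(x) g'(x))`
for every `p`, so in the modified Newton step the factor `(x - c)^p` cancels and the error
identity is pure algebra. For the bound, `|g'| ≤ M |g|` and `|e| ≤ p / (2M)` make `e g'` at most
half of `p g` in size, so the denominator `p g - e g'` has absolute value at least `p |g| / 2`.
-/

theorem deriv_sub_pow_mul_mul_sub (c : ℝ) (p : ℕ) {g : ℝ → ℝ} {x : ℝ}
    (hg : DifferentiableAt ℝ g x) :
    deriv (fun y => (y - c) ^ p * g y) x * (x - c) =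
      (x - c) ^ p * (p * g x - (c - x) * deriv g x) := by
  have hderiv := (((hasDerivAt_id' x).sub_const c).fun_pow p).fun_mul hg.hasDerivAt
  rw [hderiv.deriv]
  rcases p with _ | p
  · simp only [CharP.cast_eq_zero, pow_zero]
    ring
  · rw [Nat.add_sub_cancel, pow_succ]
    push_cast
    ring

theorem modified_newton_step_error (c : ℝ) (p : ℕ) {g : ℝ → ℝ} {x : ℝ}
    (hg : DifferentiableAt ℝ g x) (hx : x ≠ c)
    (hden : (p : ℝ) * g x - (c - x) * deriv g x ≠ 0) :
    c - (x - p * ((x - c) ^ p * g x) / deriv (fun y => (y - c) ^ p * g y) x) =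
      -(c - x) ^ 2 * deriv g x / (p * g x - (c - x) * deriv g x) := by
  have hxc : x - c ≠ 0 := sub_ne_zero.mpr hx
  rw [eq_div_of_mul_eq hxc (deriv_sub_pow_mul_mul_sub c p hg)]
  field_simp
  ring

theorem abs_sq_mul_div_sub_le {q e a b M : ℝ} (hq : 0 < q) (hM : 0 < M)
    (hb : |b| ≤ M * |a|) (he : |e| ≤ q / (2 * M)) :
    |e ^ 2 * b / (q * a - e * b)| ≤ 2 * M / q * e ^ 2 := by
  have heM : 2 * M * |e| ≤ q := by rwa [le_div_iff₀' (by positivity)] at he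
  have hden_lower : q * |b| ≤ 2 * M * |q * a - e * b| :=
    calc q * |b| ≤ 2 * M * (q * |a|) - 2 * M * |e| * |b| := by nlinarith [abs_nonneg b]
      _ = 2 * M * (|q * a| - |e * b|) := by rw [abs_mul, abs_mul, abs_of_pos hq]; ring
      _ ≤ 2 * M * |q * a - e * b| := by gcongr; exact abs_sub_abs_le_abs_sub _ _
  rw [abs_div, abs_mul, abs_pow, sq_abs]
  refine div_le_of_le_mul₀ (abs_nonneg _) (by positivity) ?_
  calc e ^ 2 * |b| = e ^ 2 / q * (q * |b|) := by field_simp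
    _ ≤ e ^ 2 / q * (2 * M * |q * a - e * b|) := by gcongr
    _ = 2 * M / q * e ^ 2 * |q * a - e * b| := by ring

theorem modified_newton_error_general
    (c : ℝ) (p : ℕ) (hp : 1 ≤ p)
    (g : ℝ → ℝ) (hg : Differentiable ℝ g)
    (f : ℝ → ℝ) (hf : ∀ x, f x = (x - c) ^ p * g x)
    (xk : ℝ) (hxk : xk ≠ c) (hgxk : g xk ≠ 0)
    (hden : (p : ℝ) * g xk - (c - xk) * deriv g xk ≠ 0)
    (xkp1 : ℝ) (hstep : xkp1 = xk - (p : ℝ) * f xk / deriv f xk) :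
    c - xkp1 = -(c - xk) ^ 2 * deriv g xk /
        ((p : ℝ) * g xk - (c - xk) * deriv g xk) ∧
    (∀ M : ℝ, 0 < M → |deriv g xk / g xk| ≤ M → |c - xk| ≤ (p : ℝ) / (2 * M) →
      |c - xkp1| ≤ (2 * M / (p : ℝ)) * (c - xk) ^ 2) := by
  obtain rfl : f = fun x => (x - c) ^ p * g x := funext hf
  have herror : c - xkp1 = -(c - xk) ^ 2 * deriv g xk /
      ((p : ℝ) * g xk - (c - xk) * deriv g xk) := by
    rw [hstep]
    exact modified_newton_step_error c p (hg xk) hxk hden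
  refine ⟨herror, fun M hM hMg he => ?_⟩
  have hg' : |deriv g xk| ≤ M * |g xk| := by
    rwa [abs_div, div_le_iff₀ (abs_pos.mpr hgxk)] at hMg
  rw [herror, neg_mul, neg_div, abs_neg]
  exact abs_sq_mul_div_sub_le (by exact_mod_cast hp) hM hg' he

/-- error of one modified Newton step x_{k+1} = x_k - p·f(x_k)/f'(x_k),
and the resulting quadratic bound. -/
theorem modified_newton_error
    (c : ℝ) (p : ℕ) (hp : 1 ≤ p)
    (g : ℝ → ℝ) (hg : Differentiable ℝ g)
    (f : ℝ → ℝ) (hf : ∀ x, f x = (x - c) ^ p * g x)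
    (xk : ℝ) (hxk : xk ≠ c) (hgxk : g xk ≠ 0)
    (hfd : deriv f xk ≠ 0)
    (hden : (p : ℝ) * g xk - (c - xk) * deriv g xk ≠ 0)
    (xkp1 : ℝ) (hstep : xkp1 = xk - (p : ℝ) * f xk / deriv f xk) :
    c - xkp1 = -(c - xk) ^ 2 * deriv g xk /
        ((p : ℝ) * g xk - (c - xk) * deriv g xk) ∧
    (∀ M : ℝ, 0 < M → |deriv g xk / g xk| ≤ M → |c - xk| ≤ (p : ℝ) / (2 * M) →
      |c - xkp1| ≤ (2 * M / (p : ℝ)) * (c - xk) ^ 2) :=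
  modified_newton_error_general c p hp g hg f hf xk hxk hgxk hden xkp1 hstep
end

section
/- Let g be C² and nonzero on an open interval N containing c, f(x) = (x-c)^p·g(x) with natural p ≥ 2, and M_1 = sup_N (1/p)|g'/g| < ∞. Suppose x_k ∈ N with |c - x_k| < 1/(2M_1), x_k ≠ c, and suppose p_k ∈ ℝ satisfies |p_k - p| ≤ 2p·M_1·δ for some δ ≥ |c - x_k| with 2M_1·δ ≤ 1/2. Then the iterate x_{k+1} = x_k + p_k·w_{k+1} with w_{k+1} = -f(x_k)/f'(x_k) satisfies |c - x_{k+1}| ≤ K·M_1·δ·|c - x_k| for an absolute constant K (e.g. K = 8). -/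
/-!
Cancelling the common factor `(x - c) ^ (p - 1)` in `f / f'` writes the Newton step as
`w = (e / p) / (1 - e ρ)` with `e = c - x` and `ρ = g' / (p g)`, so the new error is
`e (1 - (pₖ / p) / (1 - e ρ)) = e ((1 - pₖ / p) - e ρ) / (1 - e ρ)`. Since `|ρ| ≤ M₁` and
`|e| ≤ δ`, the denominator is at least `3 / 4` and the numerator at most `3 M₁ δ`, which gives
the contraction factor `4 M₁ δ`.
-/

theorem hasDerivAt_sub_pow_mul {g : ℝ → ℝ} {x : ℝ} (c : ℝ) (p : ℕ)
    (hg : DifferentiableAt ℝ g x) :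
    HasDerivAt (fun y => (y - c) ^ p * g y)
      (p * (x - c) ^ (p - 1) * g x + (x - c) ^ p * deriv g x) x := by
  simpa using (((hasDerivAt_id x).sub_const c).fun_pow p).fun_mul hg.hasDerivAt

-- Where `1 - e ρ` vanishes so does `f' x`, and both sides are `0` by the convention `a / 0 = 0`.
theorem neg_div_deriv_sub_pow_mul {g : ℝ → ℝ} {x c : ℝ} {p : ℕ} (hp : p ≠ 0)
    (hg : DifferentiableAt ℝ g x) (hgx : g x ≠ 0) :
    -((x - c) ^ p * g x) / deriv (fun y => (y - c) ^ p * g y) x =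
      (c - x) / p / (1 - (c - x) * (1 / p * (deriv g x / g x))) := by
  rcases eq_or_ne x c with rfl | hx
  · simp [hp]
  have hA : (x - c) ^ (p - 1) * (p * g x) ≠ 0 :=
    mul_ne_zero (pow_ne_zero _ (sub_ne_zero.2 hx)) (mul_ne_zero (Nat.cast_ne_zero.2 hp) hgx)
  rw [(hasDerivAt_sub_pow_mul c p hg).deriv, ← pow_sub_one_mul hp,
    ← mul_div_mul_left ((c - x) / p) _ hA]
  congr 1 <;> field_simp <;> ring

theorem abs_one_sub_div_le {p q ε : ℝ} (hp : 0 < p) (hq : |q - p| ≤ p * ε) :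
    |1 - q / p| ≤ ε := by
  rw [show 1 - q / p = -(q - p) / p by field_simp; ring, abs_div, abs_neg, abs_of_pos hp,
    div_le_iff₀ hp]
  linarith

theorem abs_mul_one_sub_div_one_sub_mul_le {e ρ q M δ : ℝ} (hρ : |ρ| ≤ M) (he : |e| ≤ δ)
    (hMδ : M * δ ≤ 1 / 4) (hq : |1 - q| ≤ 2 * M * δ) :
    |e * (1 - q / (1 - e * ρ))| ≤ 4 * M * δ * |e| := by
  have heρ : |e * ρ| ≤ M * δ := by
    rw [abs_mul, mul_comm M]
    exact mul_le_mul he hρ (abs_nonneg ρ) ((abs_nonneg e).trans he)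
  have hden : 3 / 4 ≤ |1 - e * ρ| := by
    have := abs_sub_abs_le_abs_sub 1 (e * ρ)
    rw [abs_one] at this
    linarith
  have hnum : |(1 - q) - e * ρ| ≤ 3 * M * δ := (abs_sub _ _).trans (by linarith)
  have hden0 : 0 < |1 - e * ρ| := by linarith
  rw [show 1 - q / (1 - e * ρ) = ((1 - q) - e * ρ) / (1 - e * ρ) by
      field_simp [abs_pos.1 hden0]; ring,
    abs_mul, abs_div, mul_comm _ |e|]
  gcongr
  rw [div_le_iff₀ hden0]
  nlinarith [(abs_nonneg _).trans heρ]

theorem newton_anderson_one_step_contraction_general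
    (c : ℝ) (p : ℕ) (hp : 2 ≤ p)
    (N : Set ℝ) (hN : IsOpen N)
    (g : ℝ → ℝ) (hg : ContDiffOn ℝ 2 g N) (hgne : ∀ x ∈ N, g x ≠ 0)
    (f : ℝ → ℝ) (hf : ∀ x, f x = (x - c) ^ p * g x)
    (M₁ : ℝ)
    (hM₁b : ∀ x ∈ N, (1 / (p : ℝ)) * |deriv g x / g x| ≤ M₁)
    (xk : ℝ) (hxk : xk ∈ N)
    (δ : ℝ) (hδ : |c - xk| ≤ δ) (hδs : 2 * M₁ * δ ≤ 1 / 2)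
    (pk : ℝ) (hpk : |pk - (p : ℝ)| ≤ 2 * (p : ℝ) * M₁ * δ)
    (xkp1 : ℝ) (hstep : xkp1 = xk + pk * (-f xk / deriv f xk)) :
    |c - xkp1| ≤ 8 * M₁ * δ * |c - xk| := by
  have hp0 : (0 : ℝ) < p := by exact_mod_cast (by omega : 0 < p)
  have hgxk : DifferentiableAt ℝ g xk :=
    (hg.contDiffAt (hN.mem_nhds hxk)).differentiableAt (by norm_num)
  have hρ : |1 / (p : ℝ) * (deriv g xk / g xk)| ≤ M₁ := by
    rw [abs_mul, abs_of_pos (by positivity)]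
    exact hM₁b xk hxk
  have hM₁ : 0 ≤ M₁ := (abs_nonneg _).trans hρ
  have herr : c - xkp1 =
      (c - xk) * (1 - pk / p / (1 - (c - xk) * (1 / p * (deriv g xk / g xk)))) := by
    rw [hstep, hf xk, show f = fun y => (y - c) ^ p * g y from funext hf, neg_div_deriv_sub_pow_mul (by omega) hgxk (hgne xk hxk)]
    ring
  rw [herr]
  calc _ ≤ 4 * M₁ * δ * |c - xk| :=
        abs_mul_one_sub_div_one_sub_mul_le hρ hδ (by linarith)
          (abs_one_sub_div_le hp0 (by linarith))
    _ ≤ 8 * M₁ * δ * |c - xk| := by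
        have hδ0 : 0 ≤ δ := (abs_nonneg _).trans hδ
        gcongr
        norm_num

/-- quantitative one-step contraction for the Newton-Anderson
iteration. -/
theorem newton_anderson_one_step_contraction
    (c : ℝ) (p : ℕ) (hp : 2 ≤ p)
    (N : Set ℝ) (hN : IsOpen N) (hcN : c ∈ N)
    (g : ℝ → ℝ) (hg : ContDiffOn ℝ 2 g N) (hgne : ∀ x ∈ N, g x ≠ 0)
    (f : ℝ → ℝ) (hf : ∀ x, f x = (x - c) ^ p * g x)
    (M₁ : ℝ) (hM₁ : 0 < M₁)
    (hM₁b : ∀ x ∈ N, (1 / (p : ℝ)) * |deriv g x / g x| ≤ M₁)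
    (xk : ℝ) (hxk : xk ∈ N) (hxkc : xk ≠ c)
    (hclose : |c - xk| < 1 / (2 * M₁))
    (δ : ℝ) (hδ : |c - xk| ≤ δ) (hδs : 2 * M₁ * δ ≤ 1 / 2)
    (pk : ℝ) (hpk : |pk - (p : ℝ)| ≤ 2 * (p : ℝ) * M₁ * δ)
    (xkp1 : ℝ) (hstep : xkp1 = xk + pk * (-f xk / deriv f xk)) :
    |c - xkp1| ≤ 8 * M₁ * δ * |c - xk| :=
  newton_anderson_one_step_contraction_general c p hp N hN g hg hgne f hf M₁ hM₁b xk hxk δ hδ hδs pk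
    hpk xkp1 hstep
end
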